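/- arXiv:1808.01204 — 4 statements merged into one kernel-verified Lean document; each statement's English description precedes it below -/
import Mathlib

section
/- Let φ: ℝ → ℝ be a convex function that is non-smooth at 0, with maximal subgradient ∂_max φ(0) and minimal subgradient ∂_min φ(0) at 0. Then for every τ ≥ 0 and every affine function l(α) = c·α + b, we have ∫_{-τ}^{τ} |φ(α) - l(α)| dα ≥ τ² (∂_max φ(0) - ∂_min φ(0)) / 8. -/
/-!
Subtracting an affine function shifts every subgradient by the same slope, so it suffices to
bound `∫_{-τ}^{τ} |φ|` for a convex `φ` with subgradients `d₁, d₂` at `0`. For `α ≥ 0` the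
increments of `φ` dominate those of its supporting line, `φ (α + t) ≥ φ α + d₁ t`; integrating over
`[0, t]` gives `∫_t^{2t} φ - ∫_0^t φ ≥ d₁ t²`, and the left side is at most `∫_0^{2t} |φ|`. The
mirror argument on `[-2t, 0]` with `-d₂` and `t = τ / 2` yields `τ² (d₁ - d₂) / 4`.
-/

/-- The subdifferential of `φ : ℝ → ℝ` at `x`. -/
def subgrad (φ : ℝ → ℝ) (x : ℝ) : Set ℝ :=
  {g : ℝ | ∀ y : ℝ, φ x + g * (y - x) ≤ φ y}

open Set intervalIntegral

theorem ConvexOn.continuous_of_univ {φ : ℝ → ℝ} (hφ : ConvexOn ℝ univ φ) : Continuous φ :=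
  continuousOn_univ.mp (hφ.continuousOn isOpen_univ)

theorem ConvexOn.add_mul_le_of_mem_subgrad {φ : ℝ → ℝ} (hφ : ConvexOn ℝ univ φ) {d x α t : ℝ}
    (hd : d ∈ subgrad φ x) (hα : x ≤ α) (ht : 0 ≤ t) : φ α + d * t ≤ φ (α + t) := by
  rcases ht.eq_or_lt with rfl | ht
  · simp
  rcases hα.eq_or_lt with rfl | hα
  · simpa using hd (x + t)
  have hchord := hφ.secant_mono_aux1 trivial trivial hα (lt_add_of_pos_right α ht)
  have hsupport := mul_le_mul_of_nonneg_left (hd (α + t)) ht.le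
  nlinarith

theorem convexOn_univ_comp_neg {φ : ℝ → ℝ} (hφ : ConvexOn ℝ univ φ) :
    ConvexOn ℝ univ (fun α => φ (-α)) := by
  refine ⟨convex_univ, fun x _ y _ a b ha hb hab => ?_⟩
  simpa only [smul_eq_mul, mul_neg, neg_add] using hφ.2 (x := -x) (y := -y) trivial trivial ha hb hab

theorem neg_mem_subgrad_comp_neg {φ : ℝ → ℝ} {d x : ℝ} (hd : d ∈ subgrad φ (-x)) :
    -d ∈ subgrad (fun α => φ (-α)) x := fun y => by
  have := hd (-y)
  simp only
  linarith

theorem sub_mem_subgrad_sub_affine {φ : ℝ → ℝ} {d x : ℝ} (hd : d ∈ subgrad φ x) (c b : ℝ) :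
    d - c ∈ subgrad (fun α => φ α - (c * α + b)) x := fun y => by
  have := hd y
  simp only
  linarith

theorem convexOn_univ_sub_affine {φ : ℝ → ℝ} (hφ : ConvexOn ℝ univ φ) (c b : ℝ) :
    ConvexOn ℝ univ (fun α => φ α - (c * α + b)) :=
  hφ.sub (((LinearMap.mul ℝ ℝ c).concaveOn convex_univ).add_const b)

theorem mul_sq_le_integral_sub_integral {φ : ℝ → ℝ} (hφ : ConvexOn ℝ univ φ) {d t : ℝ}
    (hd : d ∈ subgrad φ 0) (ht : 0 ≤ t) :
    d * t ^ 2 ≤ (∫ α in t..2 * t, φ α) - ∫ α in 0..t, φ α := by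
  have hφc := hφ.continuous_of_univ
  have hshift : ∫ α in 0..t, φ (α + t) = ∫ α in t..2 * t, φ α := by
    rw [integral_comp_add_right]; ring_nf
  have hstep : ∫ α in 0..t, (φ α + d * t) ≤ ∫ α in 0..t, φ (α + t) :=
    integral_mono_on ht ((hφc.add continuous_const).intervalIntegrable _ _)
      ((hφc.comp (continuous_add_const t)).intervalIntegrable _ _)
      fun α hα => hφ.add_mul_le_of_mem_subgrad hd hα.1 ht
  rw [integral_add (hφc.intervalIntegrable _ _) intervalIntegrable_const, integral_const,
    hshift, smul_eq_mul, sub_zero] at hstep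
  linarith

theorem mul_sq_le_integral_abs {φ : ℝ → ℝ} (hφ : ConvexOn ℝ univ φ) {d t : ℝ}
    (hd : d ∈ subgrad φ 0) (ht : 0 ≤ t) : d * t ^ 2 ≤ ∫ α in 0..2 * t, |φ α| := by
  have hφc := hφ.continuous_of_univ
  calc d * t ^ 2 ≤ (∫ α in t..2 * t, φ α) - ∫ α in 0..t, φ α :=
        mul_sq_le_integral_sub_integral hφ hd ht
    _ ≤ (∫ α in 0..t, |φ α|) + ∫ α in t..2 * t, |φ α| := by
        rw [sub_eq_neg_add]
        exact add_le_add ((neg_le_abs _).trans (abs_integral_le_integral_abs ht))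
          ((le_abs_self _).trans (abs_integral_le_integral_abs (by linarith)))
    _ = ∫ α in 0..2 * t, |φ α| :=
        integral_add_adjacent_intervals (hφc.abs.intervalIntegrable _ _)
          (hφc.abs.intervalIntegrable _ _)

theorem sq_mul_sub_le_integral_abs {φ : ℝ → ℝ} (hφ : ConvexOn ℝ univ φ) {d₁ d₂ τ : ℝ}
    (hd₁ : d₁ ∈ subgrad φ 0) (hd₂ : d₂ ∈ subgrad φ 0) (hτ : 0 ≤ τ) :
    τ ^ 2 * (d₁ - d₂) / 4 ≤ ∫ α in -τ..τ, |φ α| := by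
  have hφc := hφ.continuous_of_univ
  have ht : 0 ≤ τ / 2 := by positivity
  have hτ' : 2 * (τ / 2) = τ := by ring
  have hright := mul_sq_le_integral_abs hφ hd₁ ht
  have hleft := mul_sq_le_integral_abs (convexOn_univ_comp_neg hφ)
    (neg_mem_subgrad_comp_neg (by rwa [neg_zero])) ht
  rw [hτ'] at hright hleft
  rw [integral_comp_neg (fun α => |φ α|), neg_zero] at hleft
  rw [← integral_add_adjacent_intervals (b := 0) (hφc.abs.intervalIntegrable _ _)
    (hφc.abs.intervalIntegrable _ _)]
  linarith

theorem stmt_0_general (φ : ℝ → ℝ) (hφ : ConvexOn ℝ Set.univ φ)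
    (dmax dmin : ℝ)
    (hmax : IsGreatest (subgrad φ 0) dmax)
    (hmin : IsLeast (subgrad φ 0) dmin)
    (τ : ℝ) (hτ : 0 ≤ τ) (c b : ℝ) :
    τ ^ 2 * (dmax - dmin) / 8 ≤ ∫ α in (-τ)..τ, |φ α - (c * α + b)| := by
  have hbound := sq_mul_sub_le_integral_abs (convexOn_univ_sub_affine hφ c b)
    (sub_mem_subgrad_sub_affine hmax.1 c b) (sub_mem_subgrad_sub_affine hmin.1 c b) hτ
  have hgap : 0 ≤ τ ^ 2 * (dmax - dmin) := mul_nonneg (sq_nonneg τ) (sub_nonneg.2 (hmin.2 hmax.1))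
  linarith

/-- Non-smooth convex function vs affine function, integral form. -/
theorem stmt_0 (φ : ℝ → ℝ) (hφ : ConvexOn ℝ Set.univ φ)
    (dmax dmin : ℝ)
    (hmax : IsGreatest (subgrad φ 0) dmax)
    (hmin : IsLeast (subgrad φ 0) dmin)
    (hns : dmin < dmax)
    (τ : ℝ) (hτ : 0 ≤ τ) (c b : ℝ) :
    τ ^ 2 * (dmax - dmin) / 8 ≤ ∫ α in (-τ)..τ, |φ α - (c * α + b)| :=
  stmt_0_general φ hφ dmax dmin hmax hmin τ hτ c b
end

section
/- Let φ: ℝ → ℝ be a convex function non-smooth at 0, and l an affine function. Let ρ = ∂_max φ(0) - ∂_min φ(0). For every τ > 0, if α is drawn uniformly from [-τ, τ], then Pr[ |φ(α) - l(α)| ≥ τρ/128 ] ≥ 1/16. -/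
open MeasureTheory

lemma keyL (ψ : ℝ → ℝ) (hψ : ConvexOn ℝ Set.univ ψ) (τ ε m : ℝ)
    (hτ : 0 < τ) (hε : 0 < ε) (hm : ∀ α : ℝ, ψ 0 + m * α ≤ ψ α)
    (hm2 : 64 * ε ≤ τ * m) :
    ∃ u v : ℝ, 0 ≤ u ∧ v ≤ τ ∧ τ / 8 ≤ v - u ∧ ∀ α ∈ Set.Icc u v, ε ≤ |ψ α| := by
  have hmpos : 0 < m := by nlinarith
  by_cases h0 : -16 * ε ≤ ψ 0
  · refine ⟨τ / 2, τ, by positivity, le_refl _, by linarith, ?_⟩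
    intro α hα
    have h1 := hm α
    have h2 : m * (τ / 2) ≤ m * α := by
      apply mul_le_mul_of_nonneg_left hα.1 hmpos.le
    have : ε ≤ ψ α := by nlinarith
    exact this.trans (le_abs_self _)
  · push_neg at h0
    by_cases h8 : ψ (τ / 8) ≤ -ε
    · refine ⟨0, τ / 8, le_refl _, by linarith, by linarith, ?_⟩
      intro α hα
      obtain ⟨hα0, hα8⟩ := hα
      set t : ℝ := 8 * α / τ with ht_def
      have ht0 : 0 ≤ t := by positivity
      have ht1 : t ≤ 1 := by
        rw [ht_def, div_le_one hτ]; linarith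
      have hc := hψ.2 (Set.mem_univ (0 : ℝ)) (Set.mem_univ (τ / 8))
        (show (0:ℝ) ≤ 1 - t by linarith) ht0 (by ring)
      simp only [smul_eq_mul, mul_zero, zero_add] at hc
      have harg : t * (τ / 8) = α := by
        rw [ht_def]; field_simp
      rw [harg] at hc
      have hneg : ψ α ≤ -ε := by nlinarith
      exact le_abs.mpr (Or.inr (by linarith))
    · push_neg at h8
      refine ⟨τ / 4, τ, by positivity, le_refl _, by linarith, ?_⟩
      intro α hα
      obtain ⟨hα1, hα2⟩ := hα
      have hαpos : 0 < α := lt_of_lt_of_le (by positivity) hα1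
      set bb : ℝ := (τ / 8) / α with hbb_def
      have hb0 : 0 < bb := by positivity
      have hb2 : bb ≤ 1 / 2 := by
        rw [hbb_def, div_le_iff₀ hαpos]; linarith
      have hc := hψ.2 (Set.mem_univ (0 : ℝ)) (Set.mem_univ α)
        (show (0:ℝ) ≤ 1 - bb by linarith) hb0.le (by ring)
      simp only [smul_eq_mul, mul_zero, zero_add] at hc
      have harg : bb * α = τ / 8 := by
        rw [hbb_def]; field_simp
      rw [harg] at hc
      have k1 : (1 - bb) * ψ 0 ≤ (1 - bb) * (-16 * ε) :=
        mul_le_mul_of_nonneg_left h0.le (by linarith)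
      have k2 : 7 * ε ≤ bb * ψ α := by
        nlinarith [mul_le_mul_of_nonneg_right hb2 hε.le]
      have k3 : ε ≤ ψ α := by
        by_contra hcon
        push_neg at hcon
        have t1 : bb * ψ α ≤ bb * ε := mul_le_mul_of_nonneg_left hcon.le hb0.le
        have t2 : bb * ε ≤ (1 / 2) * ε := mul_le_mul_of_nonneg_right hb2 hε.le
        linarith
      exact k3.trans (le_abs_self _)

/-- Non-smooth convex function vs affine function, probabilistic form:
for `α` uniform on `[-τ, τ]`, `|φ(α) − l(α)| ≥ τρ/128` with probability at least `1/16`. -/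
theorem stmt_1 (φ : ℝ → ℝ) (hφ : ConvexOn ℝ Set.univ φ)
    (dmax dmin : ℝ)
    (hmax : IsGreatest (subgrad φ 0) dmax)
    (hmin : IsLeast (subgrad φ 0) dmin)
    (hns : dmin < dmax)
    (τ : ℝ) (hτ : 0 < τ) (c b : ℝ) :
    ENNReal.ofReal (1 / 16) ≤
      (ENNReal.ofReal (2 * τ))⁻¹ *
        volume {α ∈ Set.Icc (-τ) τ | τ * (dmax - dmin) / 128 ≤ |φ α - (c * α + b)|} := by
  set ε : ℝ := τ * (dmax - dmin) / 128 with hε_def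
  have hρ : 0 < dmax - dmin := by linarith
  have hε : 0 < ε := by rw [hε_def]; positivity
  set T := {α ∈ Set.Icc (-τ) τ | ε ≤ |φ α - (c * α + b)|} with hT_def
  -- it suffices to find an interval of length ≥ τ/8 inside T
  have main : ∀ u v : ℝ, Set.Icc u v ⊆ T → τ / 8 ≤ v - u →
      ENNReal.ofReal (1 / 16) ≤ (ENNReal.ofReal (2 * τ))⁻¹ * volume T := by
    intro u v hsub hlen
    calc ENNReal.ofReal (1 / 16)
        = (ENNReal.ofReal (2 * τ))⁻¹ * ENNReal.ofReal (τ / 8) := by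
          rw [← ENNReal.ofReal_inv_of_pos (by linarith), ← ENNReal.ofReal_mul (by positivity)]
          congr 1
          field_simp
          ring
      _ ≤ (ENNReal.ofReal (2 * τ))⁻¹ * ENNReal.ofReal (v - u) :=
          mul_le_mul_right (ENNReal.ofReal_le_ofReal hlen) _
      _ ≤ (ENNReal.ofReal (2 * τ))⁻¹ * volume T := by
          apply mul_le_mul_right
          rw [← Real.volume_Icc (a := u) (b := v)]
          exact measure_mono hsub
  by_cases hca : (dmax - dmin) / 2 ≤ dmax - c
  · -- use h(α) = φ α - (c α + b) on the right half
    set h : ℝ → ℝ := fun α => φ α - (c * α + b) with hh_def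
    have hconvh : ConvexOn ℝ Set.univ h := by
      refine ⟨convex_univ, ?_⟩
      intro x _ y _ a a' haa hbb hab
      have := hφ.2 (Set.mem_univ x) (Set.mem_univ y) haa hbb hab
      simp only [smul_eq_mul, hh_def] at this ⊢
      have key : a * (φ x - (c * x + b)) + a' * (φ y - (c * y + b)) =
          a * φ x + a' * φ y - (c * (a * x + a' * y) + b) := by
        linear_combination (-b) * hab
      linarith
    have hm : ∀ α : ℝ, h 0 + (dmax - c) * α ≤ h α := by
      intro α
      have := hmax.1 α
      simp only [hh_def]
      nlinarith [this]
    have hm2 : 64 * ε ≤ τ * (dmax - c) := by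
      rw [hε_def]
      nlinarith [mul_le_mul_of_nonneg_left hca hτ.le]
    obtain ⟨u, v, hu, hv, hlen, hP⟩ := keyL h hconvh τ ε (dmax - c) hτ hε hm hm2
    apply main u v _ hlen
    intro α hα
    refine ⟨⟨by linarith [hα.1], le_trans hα.2 hv⟩, ?_⟩
    exact hP α hα
  · push_neg at hca
    -- use the reflection ψ(α) = φ(-α) - (c·(-α) + b)
    set ψ : ℝ → ℝ := fun α => φ (-α) - (c * (-α) + b) with hψ_def
    have hconvψ : ConvexOn ℝ Set.univ ψ := by
      refine ⟨convex_univ, ?_⟩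
      intro x _ y _ a a' haa hbb hab
      have := hφ.2 (Set.mem_univ (-x)) (Set.mem_univ (-y)) haa hbb hab
      simp only [smul_eq_mul, hψ_def] at this ⊢
      have harg : a * -x + a' * -y = -(a * x + a' * y) := by ring
      rw [harg] at this
      have key : a * (φ (-x) - (c * -x + b)) + a' * (φ (-y) - (c * -y + b)) =
          a * φ (-x) + a' * φ (-y) - (c * -(a * x + a' * y) + b) := by
        linear_combination (-b) * hab
      linarith
    have hm : ∀ α : ℝ, ψ 0 + (c - dmin) * α ≤ ψ α := by
      intro α
      have := hmin.1 (-α)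
      simp only [hψ_def, neg_zero]
      nlinarith [this]
    have hm2 : 64 * ε ≤ τ * (c - dmin) := by
      rw [hε_def]
      nlinarith [mul_le_mul_of_nonneg_left (show (dmax - dmin) / 2 ≤ c - dmin by linarith) hτ.le]
    obtain ⟨u, v, hu, hv, hlen, hP⟩ := keyL ψ hconvψ τ ε (c - dmin) hτ hε hm hm2
    apply main (-v) (-u) _ (by linarith)
    intro α hα
    have hmem : -α ∈ Set.Icc u v := ⟨by linarith [hα.2], by linarith [hα.1]⟩
    have := hP (-α) hmem
    simp only [hψ_def, neg_neg] at this
    exact ⟨⟨by linarith [hα.1], by linarith [hα.2, hu, hτ]⟩, this⟩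
end

section
/- Let φ: ℝ → ℝ be convex and l: ℝ → ℝ be convex. For τ ≥ 0, set γ = (∂_max φ(τ/2) - ∂_min φ(-τ/2)) - (∂_max l(τ) - ∂_min l(-τ)). Then ∫_{-τ}^{τ} |φ(α) - l(α)| dα ≥ τ² γ / 32. -/
/-!
Put `δ = τ / 4`. A subgradient `p` of a convex `f` at `x` bounds the increments
`f (α + δ) - f α` from below by `p δ` for `α ≥ x`, and a subgradient at `y` bounds them from
above for `α + δ ≤ y`. On `[τ/2, τ]` this makes the increments of `φ - l` at least
`(∂_max φ(τ/2) - ∂_max l(τ)) δ`, and on `[-τ, -τ/2]` those of `l - φ` at least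
`(∂_min l(-τ) - ∂_min φ(-τ/2)) δ`. Since `∫_a^{a+δ} |g (α + δ) - g α| ≤ ∫_a^{a+2δ} |g|`,
the two halves give `γ τ² / 16 ≤ ∫_{-τ}^{τ} |φ - l|`.
-/

open Set intervalIntegral

section Subgradient

variable {f : ℝ → ℝ} {p a b : ℝ}

lemma mul_sub_le_sub_of_mem_subgrad (hf : ConvexOn ℝ univ f) {x : ℝ} (hp : p ∈ subgrad f x)
    (hxa : x ≤ a) (hab : a ≤ b) : p * (b - a) ≤ f b - f a := by
  rcases hxa.eq_or_lt with rfl | hxa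
  · linarith [hp b]
  rcases hab.eq_or_lt with rfl | hab
  · simp
  have hslope := hf.slope_mono_adjacent (mem_univ x) (mem_univ b) hxa hab
  have hpa : p ≤ (f a - f x) / (a - x) := by
    rw [le_div_iff₀ (by linarith)]; linarith [hp a]
  rw [← le_div_iff₀ (by linarith)]
  exact hpa.trans hslope

lemma sub_le_mul_sub_of_mem_subgrad (hf : ConvexOn ℝ univ f) {y : ℝ} (hp : p ∈ subgrad f y)
    (hab : a ≤ b) (hby : b ≤ y) : f b - f a ≤ p * (b - a) := by
  rcases hby.eq_or_lt with rfl | hby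
  · linarith [hp a]
  rcases hab.eq_or_lt with rfl | hab
  · simp
  have hslope := hf.slope_mono_adjacent (mem_univ a) (mem_univ y) hab hby
  have hpb : (f y - f b) / (y - b) ≤ p := by
    rw [div_le_iff₀ (by linarith)]; linarith [hp b]
  rw [← div_le_iff₀ (by linarith)]
  exact hslope.trans hpb

end Subgradient

lemma mul_sq_le_integral_abs_of_mul_le_sub {g : ℝ → ℝ} (hg : Continuous g) {a δ c : ℝ}
    (hδ : 0 ≤ δ) (hinc : ∀ α ∈ Icc a (a + δ), c * δ ≤ g (α + δ) - g α) :
    c * δ ^ 2 ≤ ∫ α in a..a + 2 * δ, |g α| := by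
  have habs : ∀ u v, IntervalIntegrable (fun α => |g α|) MeasureTheory.volume u v :=
    fun u v => hg.abs.intervalIntegrable u v
  have hshift : Continuous fun α => |g (α + δ)| := (hg.comp (continuous_add_const δ)).abs
  calc c * δ ^ 2 = ∫ _ in a..a + δ, c * δ := by simp only [integral_const, smul_eq_mul]; ring
    _ ≤ ∫ α in a..a + δ, (|g (α + δ)| + |g α|) := by
        refine integral_mono_on (by linarith) intervalIntegrable_const
          ((hshift.add hg.abs).intervalIntegrable _ _) fun α hα => ?_
        linarith [hinc α hα, le_abs_self (g (α + δ)), neg_abs_le (g α)]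
    _ = (∫ α in a + δ..a + 2 * δ, |g α|) + ∫ α in a..a + δ, |g α| := by
        rw [integral_add (hshift.intervalIntegrable _ _) (habs _ _),
          integral_comp_add_right (fun α => |g α|), add_assoc, ← two_mul]
    _ = ∫ α in a..a + 2 * δ, |g α| := by
        rw [add_comm, integral_add_adjacent_intervals (habs _ _) (habs _ _)]

lemma mul_sq_le_integral_abs_sub {f g : ℝ → ℝ} {a b p q : ℝ} (hf : ConvexOn ℝ univ f)
    (hg : ConvexOn ℝ univ g) (hab : a ≤ b) (hp : p ∈ subgrad f a) (hq : q ∈ subgrad g b) :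
    (p - q) * ((b - a) / 2) ^ 2 ≤ ∫ α in a..b, |f α - g α| := by
  obtain ⟨δ, hδ, rfl⟩ : ∃ δ, 0 ≤ δ ∧ b = a + 2 * δ :=
    ⟨(b - a) / 2, by linarith, by ring⟩
  rw [show (a + 2 * δ - a) / 2 = δ by ring]
  refine mul_sq_le_integral_abs_of_mul_le_sub (g := fun α => f α - g α)
    (hf.locallyLipschitz.continuous.sub hg.locallyLipschitz.continuous) hδ fun α hα => ?_
  have hf_inc := mul_sub_le_sub_of_mem_subgrad hf hp hα.1 (b := α + δ) (by linarith)
  have hg_inc := sub_le_mul_sub_of_mem_subgrad hg hq (a := α) (b := α + δ) (by linarith)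
    (by linarith [hα.2])
  simp only [add_sub_cancel_left] at hf_inc hg_inc
  linarith

/-- Non-smooth convex function vs convex function, integral form. -/
theorem stmt_2 (φ l : ℝ → ℝ) (hφ : ConvexOn ℝ Set.univ φ) (hl : ConvexOn ℝ Set.univ l)
    (τ : ℝ) (hτ : 0 ≤ τ)
    (pφ qφ pl ql γ : ℝ)
    (hpφ : IsGreatest (subgrad φ (τ / 2)) pφ)
    (hqφ : IsLeast (subgrad φ (-(τ / 2))) qφ)
    (hpl : IsGreatest (subgrad l τ) pl)
    (hql : IsLeast (subgrad l (-τ)) ql)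
    (hγ : γ = (pφ - qφ) - (pl - ql)) :
    τ ^ 2 * γ / 32 ≤ ∫ α in (-τ)..τ, |φ α - l α| := by
  have hright := mul_sq_le_integral_abs_sub hφ hl (by linarith) hpφ.1 hpl.1
  have hleft := mul_sq_le_integral_abs_sub hl hφ (by linarith) hql.1 hqφ.1
  simp only [abs_sub_comm (l _)] at hleft
  have hcont : Continuous fun α => |φ α - l α| :=
    (hφ.locallyLipschitz.continuous.sub hl.locallyLipschitz.continuous).abs
  have habs : ∀ u v, IntervalIntegrable (fun α => |φ α - l α|) MeasureTheory.volume u v :=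
    fun u v => hcont.intervalIntegrable u v
  have hsplit : (∫ α in (-τ)..τ, |φ α - l α|) = (∫ α in (-τ)..-(τ / 2), |φ α - l α|)
      + (∫ α in -(τ / 2)..τ / 2, |φ α - l α|) + ∫ α in τ / 2..τ, |φ α - l α| := by
    rw [integral_add_adjacent_intervals (habs _ _) (habs _ _),
      integral_add_adjacent_intervals (habs _ _) (habs _ _)]
  have hmiddle : 0 ≤ ∫ α in -(τ / 2)..τ / 2, |φ α - l α| :=
    integral_nonneg (by linarith) fun _ _ => abs_nonneg _
  have htotal : 0 ≤ ∫ α in (-τ)..τ, |φ α - l α| :=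
    integral_nonneg (by linarith) fun _ _ => abs_nonneg _
  have hkey : τ ^ 2 * γ / 16 ≤ ∫ α in (-τ)..τ, |φ α - l α| := by
    rw [hsplit, hγ]
    linarith
  linarith
end

section
/- Let φ, l: ℝ → ℝ be convex, τ > 0, and γ = (∂_max φ(τ/2) - ∂_min φ(-τ/2)) - (∂_max l(τ) - ∂_min l(-τ)). If α is drawn uniformly from [-τ, τ], then Pr[ |φ(α) - l(α)| ≥ τγ/512 ] ≥ 1/64. -/
open MeasureTheory

/-- If `p` is a subgradient at `a`, then to the right of `a` all slopes are `≥ p`. -/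
lemma key1 (f : ℝ → ℝ) (hf : ConvexOn ℝ Set.univ f) (a p : ℝ)
    (hp : ∀ y, f a + p * (y - a) ≤ f y) :
    ∀ u v, a ≤ u → u ≤ v → f u + p * (v - u) ≤ f v := by
  intro u v hau huv
  rcases eq_or_lt_of_le huv with rfl | huv
  · simp
  rcases eq_or_lt_of_le hau with rfl | hau
  · linarith [hp v]
  have hslope := hf.slope_mono_adjacent (Set.mem_univ a) (Set.mem_univ v) hau huv
  have h1 : (0:ℝ) < u - a := by linarith
  have h2 : (0:ℝ) < v - u := by linarith
  have hpu : p ≤ (f u - f a) / (u - a) := by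
    rw [le_div_iff₀ h1]; linarith [hp u]
  have : p ≤ (f v - f u) / (v - u) := hpu.trans hslope
  rw [le_div_iff₀ h2] at this
  linarith

/-- If `q` is a subgradient at `b`, then to the left of `b` all slopes are `≤ q`. -/
lemma key2 (f : ℝ → ℝ) (hf : ConvexOn ℝ Set.univ f) (b q : ℝ)
    (hq : ∀ y, f b + q * (y - b) ≤ f y) :
    ∀ u v, u ≤ v → v ≤ b → f v + q * (u - v) ≤ f u := by
  intro u v huv hvb
  rcases eq_or_lt_of_le huv with rfl | huv
  · simp
  rcases eq_or_lt_of_le hvb with rfl | hvb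
  · linarith [hq u]
  have hslope := hf.slope_mono_adjacent (Set.mem_univ u) (Set.mem_univ b) huv hvb
  have h1 : (0:ℝ) < v - u := by linarith
  have h2 : (0:ℝ) < b - v := by linarith
  have hqv : (f b - f v) / (b - v) ≤ q := by
    rw [div_le_iff₀ h2]; linarith [hq v]
  have : (f v - f u) / (v - u) ≤ q := hslope.trans hqv
  rw [div_le_iff₀ h1] at this
  linarith

/-- Non-smooth convex function vs convex function, probabilistic form. -/
theorem stmt_3 (φ l : ℝ → ℝ) (hφ : ConvexOn ℝ Set.univ φ) (hl : ConvexOn ℝ Set.univ l)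
    (τ : ℝ) (hτ : 0 < τ)
    (pφ qφ pl ql γ : ℝ)
    (hpφ : IsGreatest (subgrad φ (τ / 2)) pφ)
    (hqφ : IsLeast (subgrad φ (-(τ / 2))) qφ)
    (hpl : IsGreatest (subgrad l τ) pl)
    (hql : IsLeast (subgrad l (-τ)) ql)
    (hγ : γ = (pφ - qφ) - (pl - ql)) :
    ENNReal.ofReal (1 / 64) ≤
      (ENNReal.ofReal (2 * τ))⁻¹ *
        volume {α ∈ Set.Icc (-τ) τ | τ * γ / 512 ≤ |φ α - l α|} := by
  set S := {α ∈ Set.Icc (-τ) τ | τ * γ / 512 ≤ |φ α - l α|} with hS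
  have key : ∀ a b : ℝ, τ / 32 ≤ b - a → Set.Icc a b ⊆ S →
      ENNReal.ofReal (1 / 64) ≤ (ENNReal.ofReal (2 * τ))⁻¹ * volume S := by
    intro a b hab hsub
    have h2τ : (0:ℝ) < 2 * τ := by linarith
    calc ENNReal.ofReal (1 / 64)
        ≤ ENNReal.ofReal ((b - a) / (2 * τ)) := by
          apply ENNReal.ofReal_le_ofReal
          rw [le_div_iff₀ h2τ]; linarith
      _ = ENNReal.ofReal (b - a) / ENNReal.ofReal (2 * τ) :=
          ENNReal.ofReal_div_of_pos h2τ
      _ = (ENNReal.ofReal (2 * τ))⁻¹ * ENNReal.ofReal (b - a) := by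
          rw [div_eq_mul_inv, mul_comm]
      _ ≤ (ENNReal.ofReal (2 * τ))⁻¹ * volume S := by
          apply mul_le_mul_right
          rw [← Real.volume_Icc]
          exact measure_mono hsub
  rcases le_or_gt γ 0 with hγ0 | hγ0
  · apply key (-τ) τ
    · linarith
    · intro x hx
      refine ⟨hx, le_trans ?_ (abs_nonneg _)⟩
      have : τ * γ ≤ 0 := mul_nonpos_of_nonneg_of_nonpos hτ.le hγ0
      linarith
  have hPQ : (pφ - pl) - (qφ - ql) = γ := by linarith
  rcases le_or_gt (γ / 2) (pφ - pl) with hP | hP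
  · -- right-hand side argument
    have hφs : ∀ u v, τ / 2 ≤ u → u ≤ v → φ u + pφ * (v - u) ≤ φ v :=
      key1 φ hφ (τ / 2) pφ hpφ.1
    have hls : ∀ u v, u ≤ v → v ≤ τ → l v + pl * (u - v) ≤ l u :=
      key2 l hl τ pl hpl.1
    by_cases hx1 : ∃ x1 ∈ Set.Icc (τ / 2) (7 * τ / 8), -(τ * γ / 512) ≤ φ x1 - l x1
    · obtain ⟨x1, hx1m, hx1v⟩ := hx1
      obtain ⟨hx1a, hx1b⟩ := hx1m
      apply key (x1 + τ / 128) τ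
      · linarith
      · intro x hx
        obtain ⟨hxa, hxb⟩ := hx
        have hx1x : x1 ≤ x := by linarith
        have h1 := hφs x1 x hx1a hx1x
        have h2 := hls x1 x hx1x hxb
        refine ⟨⟨by linarith, hxb⟩, le_trans ?_ (le_abs_self _)⟩
        nlinarith [mul_nonneg (by linarith : (0:ℝ) ≤ pφ - pl - γ / 2) (by linarith : (0:ℝ) ≤ x - x1),
          mul_nonneg (by linarith : (0:ℝ) ≤ γ / 2) (by linarith : (0:ℝ) ≤ x - x1 - τ / 128)]
    · push_neg at hx1
      apply key (τ / 2) (7 * τ / 8)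
      · linarith
      · intro x hx
        obtain ⟨hxa, hxb⟩ := hx
        have hneg := hx1 x ⟨hxa, hxb⟩
        refine ⟨⟨by linarith, by linarith⟩, ?_⟩
        have := neg_le_abs (φ x - l x)
        linarith
  · -- left-hand side argument
    have hQ : qφ - ql ≤ -(γ / 2) := by linarith
    have hφs : ∀ u v, u ≤ v → v ≤ -(τ / 2) → φ v + qφ * (u - v) ≤ φ u :=
      key2 φ hφ (-(τ / 2)) qφ hqφ.1
    have hls : ∀ u v, -τ ≤ u → u ≤ v → l u + ql * (v - u) ≤ l v :=
      key1 l hl (-τ) ql hql.1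
    by_cases hx1 : ∃ x1 ∈ Set.Icc (-(7 * τ / 8)) (-(τ / 2)), -(τ * γ / 512) ≤ φ x1 - l x1
    · obtain ⟨x1, hx1m, hx1v⟩ := hx1
      obtain ⟨hx1a, hx1b⟩ := hx1m
      apply key (-τ) (x1 - τ / 128)
      · linarith
      · intro x hx
        obtain ⟨hxa, hxb⟩ := hx
        have hxx1 : x ≤ x1 := by linarith
        have h1 := hφs x x1 hxx1 hx1b
        have h2 := hls x x1 hxa hxx1
        refine ⟨⟨hxa, by linarith⟩, le_trans ?_ (le_abs_self _)⟩
        nlinarith [mul_nonneg (by linarith : (0:ℝ) ≤ -(γ / 2) - (qφ - ql)) (by linarith : (0:ℝ) ≤ x1 - x),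
          mul_nonneg (by linarith : (0:ℝ) ≤ γ / 2) (by linarith : (0:ℝ) ≤ x1 - x - τ / 128)]
    · push_neg at hx1
      apply key (-(7 * τ / 8)) (-(τ / 2))
      · linarith
      · intro x hx
        obtain ⟨hxa, hxb⟩ := hx
        have hneg := hx1 x ⟨hxa, hxb⟩
        refine ⟨⟨by linarith, by linarith⟩, ?_⟩
        have := neg_le_abs (φ x - l x)
        linarith
end
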